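/- arXiv:2502.07520 — 2 statements merged into one kernel-verified Lean document; each statement's English description precedes it below -/
import Mathlib

section
/- For every integer p ≥ 1 and every integer n ≥ 1, the Mostar index of the Fibonacci p-cube satisfies Mo(Γ^p_n) = F^p_{n+p+1} · Σ_{i=1}^{n} F^p_i F^p_{n−i+1} − 2·Σ_{i=1}^{n} (F^p_i F^p_{n−i+1})^2. -/
/-- Fibonacci `p`-numbers: `F^p_0 = 0`, `F^p_m = 1` for `1 ≤ m ≤ p`,
and `F^p_m = F^p_{m-1} + F^p_{m-p-1}` for `m ≥ p+1`. -/
def fibP (p : ℕ) : ℕ → ℕ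
  | 0 => 0
  | m + 1 => if m + 1 ≤ p then 1 else fibP p m + fibP p (m - p)

/-- A Fibonacci `p`-string of length `n`: any two `1`s are separated by at least `p` `0`s. -/
def IsFibStr (p : ℕ) {n : ℕ} (u : Fin n → Bool) : Prop :=
  ∀ i j : Fin n, u i = true → u j = true → (i : ℕ) < (j : ℕ) → (i : ℕ) + p + 1 ≤ (j : ℕ)

instance (p n : ℕ) : DecidablePred fun u : Fin n → Bool => IsFibStr p u := fun u =>
  decidable_of_iff
    (∀ i j : Fin n, u i = true → u j = true → (i : ℕ) < (j : ℕ) → (i : ℕ) + p + 1 ≤ (j : ℕ))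
    Iff.rfl

/-- Hamming weight of a binary string. -/
def wt {n : ℕ} (u : Fin n → Bool) : ℕ := (Finset.univ.filter fun i => u i = true).card

/-- The Fibonacci `p`-cube `Γ^p_n`. -/
def FibCube (p n : ℕ) : SimpleGraph {u : Fin n → Bool // IsFibStr p u} where
  Adj u v := (Finset.univ.filter fun i => u.1 i ≠ v.1 i).card = 1
  symm := by
    constructor
    intro u v h
    have : (Finset.univ.filter fun i => v.1 i ≠ u.1 i)
        = (Finset.univ.filter fun i => u.1 i ≠ v.1 i) := by
      apply Finset.filter_congr
      intro i _
      simp [ne_comm]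
    rw [this]
    exact h
  loopless := by constructor; intro u h; simp at h

instance (p n : ℕ) : DecidableRel (FibCube p n).Adj := fun u v =>
  decidable_of_iff ((Finset.univ.filter fun i => u.1 i ≠ v.1 i).card = 1) Iff.rfl

/-- `c_k(Γ^p_n)`: induced `Q_k`-subgraphs, encoded as pairs (bottom, top). -/
noncomputable def cubeCount (p n k : ℕ) : ℕ :=
  Nat.card {bt : (Fin n → Bool) × (Fin n → Bool) //
    IsFibStr p bt.1 ∧ IsFibStr p bt.2 ∧ (∀ i, bt.1 i = true → bt.2 i = true) ∧
    (Finset.univ.filter fun i => bt.1 i ≠ bt.2 i).card = k}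

/-- `c_{k,d}(Γ^p_n)`: induced `Q_k`-subgraphs with bottom vertex of weight `d`. -/
noncomputable def cubeCountD (p n k d : ℕ) : ℕ :=
  Nat.card {bt : (Fin n → Bool) × (Fin n → Bool) //
    IsFibStr p bt.1 ∧ IsFibStr p bt.2 ∧ (∀ i, bt.1 i = true → bt.2 i = true) ∧
    (Finset.univ.filter fun i => bt.1 i ≠ bt.2 i).card = k ∧ wt bt.1 = d}

/-- Weight enumerator polynomial of `Γ^p_n`. -/
noncomputable def weightPoly (p n : ℕ) : Polynomial ℤ :=
  ∑ u : {u : Fin n → Bool // IsFibStr p u}, Polynomial.X ^ wt u.1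

/-- Distance cube polynomial of `Γ^p_n`, in variables `X 0 = x` and `X 1 = q`. -/
noncomputable def distCubePoly (p n : ℕ) : MvPolynomial (Fin 2) ℤ :=
  ∑ k ∈ Finset.range (n + 1), ∑ d ∈ Finset.range (n + 1),
    (cubeCountD p n k d : MvPolynomial (Fin 2) ℤ) *
      MvPolynomial.X 0 ^ k * MvPolynomial.X 1 ^ d

/-- Flip coordinate `j` of a binary string (`u + δ_j`). -/
def flipCoord {n : ℕ} (u : Fin n → Bool) (j : Fin n) : Fin n → Bool :=
  Function.update u j (!u j)

namespace MoAux

open Finset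

variable {p n : ℕ}

def hd {n : ℕ} (u v : Fin n → Bool) : ℕ := (Finset.univ.filter fun i => u i ≠ v i).card

lemma hd_comm (u v : Fin n → Bool) : hd u v = hd v u := by
  unfold hd
  congr 1
  apply Finset.filter_congr
  intro i _
  simp [ne_comm]

lemma hd_eq_zero_iff {u v : Fin n → Bool} : hd u v = 0 ↔ u = v := by
  unfold hd
  rw [Finset.card_eq_zero, Finset.filter_eq_empty_iff]
  constructor
  · intro h; funext i; have := h (Finset.mem_univ i); simpa using this
  · intro h i _; simp [h]

lemma hd_triangle (u v w : Fin n → Bool) : hd u w ≤ hd u v + hd v w := by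
  unfold hd
  calc (Finset.univ.filter fun i => u i ≠ w i).card
      ≤ ((Finset.univ.filter fun i => u i ≠ v i) ∪ (Finset.univ.filter fun i => v i ≠ w i)).card := by
        apply Finset.card_le_card
        intro i hi
        simp only [Finset.mem_filter, Finset.mem_univ, true_and] at hi
        simp only [Finset.mem_union, Finset.mem_filter, Finset.mem_univ, true_and]
        by_contra hc
        push_neg at hc
        exact hi (hc.1.trans hc.2)
    _ ≤ _ := Finset.card_union_le _ _

lemma isFibStr_mono {u v : Fin n → Bool} (hv : IsFibStr p v)
    (h : ∀ i, u i = true → v i = true) : IsFibStr p u :=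
  fun i j hi hj hij => hv i j (h i hi) (h j hj) hij

lemma adj_iff_hd {u v : {u : Fin n → Bool // IsFibStr p u}} :
    (FibCube p n).Adj u v ↔ hd u.1 v.1 = 1 := Iff.rfl

end MoAux

namespace MoAux

open Finset

variable {p n : ℕ}

lemma bool_ne (a b : Bool) (h : a ≠ b) : b = !a := by
  cases a <;> cases b <;> simp_all

lemma flip_apply_self (u : Fin n → Bool) (j : Fin n) : flipCoord u j j = !u j := by
  simp [flipCoord]

lemma flip_apply_ne (u : Fin n → Bool) (j i : Fin n) (h : i ≠ j) : flipCoord u j i = u i := by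
  simp [flipCoord, Function.update_of_ne h]

lemma hd_flip (u : Fin n → Bool) (j : Fin n) : hd u (flipCoord u j) = 1 := by
  unfold hd
  rw [show (Finset.univ.filter fun i => u i ≠ flipCoord u j i) = {j} from ?_]
  · simp
  · ext i
    simp only [Finset.mem_filter, Finset.mem_univ, true_and, Finset.mem_singleton]
    constructor
    · intro h
      by_contra hc
      exact h (flip_apply_ne u j i hc).symm
    · rintro rfl
      rw [flip_apply_self]
      cases u i <;> simp

lemma exists_walk (k : ℕ) : ∀ (u v : {u : Fin n → Bool // IsFibStr p u}), hd u.1 v.1 = k →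
    ∃ w : (FibCube p n).Walk u v, w.length = k := by
  induction k with
  | zero =>
    intro u v h
    have : u = v := Subtype.ext (hd_eq_zero_iff.mp h)
    subst this
    exact ⟨SimpleGraph.Walk.nil, rfl⟩
  | succ k ih =>
    intro u v h
    set S := Finset.univ.filter fun i => u.1 i ≠ v.1 i with hS
    have hScard : S.card = k + 1 := h
    have hSne : S.Nonempty := Finset.card_pos.mp (by omega)
    have hj : ∃ j ∈ S, IsFibStr p (flipCoord u.1 j) := by
      by_cases hex : ∃ i ∈ S, u.1 i = true
      · obtain ⟨j0, hj0S, hj0t⟩ := hex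
        refine ⟨j0, hj0S, isFibStr_mono u.2 ?_⟩
        intro i hi
        by_cases hij : i = j0
        · subst hij; rw [flip_apply_self, hj0t] at hi; simp at hi
        · rwa [flip_apply_ne u.1 j0 i hij] at hi
      · push_neg at hex
        obtain ⟨j0, hj0S⟩ := hSne
        refine ⟨j0, hj0S, isFibStr_mono v.2 ?_⟩
        intro i hi
        by_cases hij : i = j0
        · subst hij
          rw [flip_apply_self] at hi
          have hju : u.1 i = false := by
            have := hex i hj0S
            cases h' : u.1 i
            · rfl
            · exact absurd h' this
          have hne : u.1 i ≠ v.1 i := by simpa [hS] using hj0S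
          rw [hju] at hne
          cases h' : v.1 i
          · exact absurd h'.symm hne
          · rfl
        · rw [flip_apply_ne u.1 j0 i hij] at hi
          by_contra hvi
          have hiS : i ∈ S := by
            simp only [hS, Finset.mem_filter, Finset.mem_univ, true_and]
            rw [hi]
            exact fun hEq => hvi hEq.symm
          exact (hex i hiS) hi
    obtain ⟨j, hjS, hvalid⟩ := hj
    have hadj : (FibCube p n).Adj u ⟨flipCoord u.1 j, hvalid⟩ := hd_flip u.1 j
    have hstep : hd (flipCoord u.1 j) v.1 = k := by
      have hfe : (Finset.univ.filter fun i => flipCoord u.1 j i ≠ v.1 i) = S.erase j := by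
        ext i
        simp only [Finset.mem_filter, Finset.mem_univ, true_and, Finset.mem_erase]
        by_cases hij : i = j
        · subst hij
          have hne : u.1 i ≠ v.1 i := by simpa [hS] using hjS
          simp [flip_apply_self, bool_ne _ _ hne]
        · simp [flip_apply_ne u.1 j i hij, hij, hS]
      unfold hd
      rw [hfe, Finset.card_erase_of_mem hjS, hScard]
      omega
    obtain ⟨w, hw⟩ := ih ⟨flipCoord u.1 j, hvalid⟩ v hstep
    exact ⟨SimpleGraph.Walk.cons hadj w, by simp [hw]⟩

lemma hd_le_length {u v : {u : Fin n → Bool // IsFibStr p u}}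
    (w : (FibCube p n).Walk u v) : hd u.1 v.1 ≤ w.length := by
  induction w with
  | nil => simp [hd_eq_zero_iff.mpr rfl]
  | @cons a b c hab q ih =>
    have h1 : hd a.1 b.1 = 1 := hab
    calc hd a.1 c.1 ≤ hd a.1 b.1 + hd b.1 c.1 := hd_triangle _ _ _
      _ ≤ 1 + q.length := by rw [h1]; omega
      _ = (SimpleGraph.Walk.cons hab q).length := by simp [Nat.add_comm]

lemma dist_eq_hd (u v : {u : Fin n → Bool // IsFibStr p u}) :
    (FibCube p n).dist u v = hd u.1 v.1 := by
  obtain ⟨w, hw⟩ := exists_walk (p := p) (hd u.1 v.1) u v rfl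
  refine le_antisymm (hw ▸ SimpleGraph.dist_le w) ?_
  obtain ⟨q, hq⟩ := w.reachable.exists_walk_length_eq_dist
  rw [← hq]
  exact hd_le_length q

end MoAux

namespace MoAux

open Finset

variable {p n : ℕ}

lemma filter_flip (u : Fin n → Bool) (j : Fin n) :
    (Finset.univ.filter fun i => flipCoord u j i ≠ u i) = {j} := by
  ext i
  simp only [Finset.mem_filter, Finset.mem_univ, true_and, Finset.mem_singleton]
  constructor
  · intro h
    by_contra hc
    exact h (flip_apply_ne u j i hc)
  · rintro rfl
    rw [flip_apply_self]
    cases u i <;> simp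

lemma flip_flip (u : Fin n → Bool) (j : Fin n) : flipCoord (flipCoord u j) j = u := by
  funext i
  by_cases h : i = j
  · subst h; rw [flip_apply_self, flip_apply_self]; cases u i <;> simp
  · rw [flip_apply_ne _ j i h, flip_apply_ne _ j i h]

lemma hd_sub (w : Fin n → Bool) {a b : Fin n → Bool} (j : Fin n)
    (hj : ∀ i, i ≠ j → a i = b i) (haj : a j = false) (hbj : b j = true) :
    (hd w a : ℤ) - hd w b = if w j = true then 1 else -1 := by
  have ha : (hd w a : ℤ) = ∑ i : Fin n, if w i ≠ a i then (1 : ℤ) else 0 := by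
    unfold hd
    rw [Finset.card_filter]
    push_cast
    rfl
  have hb : (hd w b : ℤ) = ∑ i : Fin n, if w i ≠ b i then (1 : ℤ) else 0 := by
    unfold hd
    rw [Finset.card_filter]
    push_cast
    rfl
  rw [ha, hb, ← Finset.sum_sub_distrib]
  rw [Finset.sum_eq_single j]
  · rw [haj, hbj]
    cases h : w j <;> simp
  · intro i _ hij
    rw [hj i hij]
    ring
  · intro h; exact absurd (Finset.mem_univ j) h

lemma natCard_filter (P : {u : Fin n → Bool // IsFibStr p u} → Prop) [DecidablePred P] :
    Nat.card {w : {u : Fin n → Bool // IsFibStr p u} // P w} = (Finset.univ.filter P).card := by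
  simp [Nat.card_eq_fintype_card, Fintype.card_subtype]

lemma card_true_le_card_false (j : Fin n) :
    (Finset.univ.filter fun w : {u : Fin n → Bool // IsFibStr p u} => w.1 j = true).card ≤
    (Finset.univ.filter fun w : {u : Fin n → Bool // IsFibStr p u} => w.1 j = false).card := by
  classical
  have hval : ∀ w : {u : Fin n → Bool // IsFibStr p u}, w.1 j = true →
      IsFibStr p (flipCoord w.1 j) := by
    intro w hw
    apply isFibStr_mono w.2
    intro i hi
    by_cases h : i = j
    · subst h; rw [flip_apply_self, hw] at hi; simp at hi
    · rwa [flip_apply_ne _ j i h] at hi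
  apply Finset.card_le_card_of_injOn
    (fun w => if h : IsFibStr p (flipCoord w.1 j) then ⟨flipCoord w.1 j, h⟩ else w)
  · intro w hw
    simp only [Finset.coe_filter, Set.mem_setOf_eq, Finset.mem_coe, Finset.mem_filter, Finset.mem_univ, true_and] at hw ⊢
    rw [dif_pos (hval w hw)]
    show flipCoord w.1 j j = false
    rw [flip_apply_self, hw]
    rfl
  · intro w hw w' hw' h
    simp only [Finset.coe_filter, Set.mem_setOf_eq, Finset.mem_univ, true_and] at hw hw'
    simp only at h
    rw [dif_pos (hval w hw), dif_pos (hval w' hw')] at h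
    have := congrArg (fun x : {u : Fin n → Bool // IsFibStr p u} => flipCoord x.1 j) h
    simp only [flip_flip] at this
    exact Subtype.ext this

lemma card_true_add_card_false (j : Fin n) :
    (Finset.univ.filter fun w : {u : Fin n → Bool // IsFibStr p u} => w.1 j = true).card +
    (Finset.univ.filter fun w : {u : Fin n → Bool // IsFibStr p u} => w.1 j = false).card =
    Fintype.card {u : Fin n → Bool // IsFibStr p u} := by
  classical
  have h := Finset.card_filter_add_card_filter_not
    (s := (Finset.univ : Finset {u : Fin n → Bool // IsFibStr p u}))
    (p := fun w => w.1 j = true)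
  rw [Finset.card_univ] at h
  rw [← h]
  congr 2
  apply Finset.filter_congr
  intro w _
  cases hw : w.1 j <;> simp [hw]

lemma edge_term {u v : {u : Fin n → Bool // IsFibStr p u}} (j : Fin n)
    (hj : ∀ i, i ≠ j → u.1 i = v.1 i) (huj : u.1 j = false) (hvj : v.1 j = true) :
    |(Nat.card {w : {u : Fin n → Bool // IsFibStr p u} //
          (FibCube p n).dist w u < (FibCube p n).dist w v} : ℤ) -
      (Nat.card {w : {u : Fin n → Bool // IsFibStr p u} //
          (FibCube p n).dist w v < (FibCube p n).dist w u} : ℤ)| =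
    (Fintype.card {u : Fin n → Bool // IsFibStr p u} : ℤ) -
      2 * (Finset.univ.filter fun w : {u : Fin n → Bool // IsFibStr p u} => w.1 j = true).card := by
  have key : ∀ w : {u : Fin n → Bool // IsFibStr p u},
      ((FibCube p n).dist w u < (FibCube p n).dist w v ↔ w.1 j = false) ∧
      ((FibCube p n).dist w v < (FibCube p n).dist w u ↔ w.1 j = true) := by
    intro w
    have h := hd_sub w.1 j hj huj hvj
    rw [dist_eq_hd, dist_eq_hd]
    cases hw : w.1 j <;> simp only [hw] at h <;> constructor <;> simp_all <;> omega
  have e1 : Nat.card {w : {u : Fin n → Bool // IsFibStr p u} //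
      (FibCube p n).dist w u < (FibCube p n).dist w v} =
      (Finset.univ.filter fun w : {u : Fin n → Bool // IsFibStr p u} => w.1 j = false).card := by
    rw [natCard_filter]
    congr 1
    apply Finset.filter_congr
    intro w _
    simpa using (key w).1
  have e2 : Nat.card {w : {u : Fin n → Bool // IsFibStr p u} //
      (FibCube p n).dist w v < (FibCube p n).dist w u} =
      (Finset.univ.filter fun w : {u : Fin n → Bool // IsFibStr p u} => w.1 j = true).card := by
    rw [natCard_filter]
    congr 1
    apply Finset.filter_congr
    intro w _
    simpa using (key w).2
  rw [e1, e2]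
  have hle := card_true_le_card_false (p := p) j
  have hadd := card_true_add_card_false (p := p) j
  rw [abs_of_nonneg (by omega)]
  omega

end MoAux

namespace MoAux

open Finset

variable {p : ℕ}

/-- Glue map on naturals, inverse of the split. -/
def glueN (p j b : ℕ) (v : Fin (j - p) → Bool) (w : Fin b → Bool) : ℕ → Bool :=
  fun t => if h1 : t < j - p then v ⟨t, h1⟩
    else if t = j then true
    else if h2 : j + p + 1 ≤ t ∧ t - (j + p + 1) < b then w ⟨t - (j + p + 1), h2.2⟩
    else false

variable {j b : ℕ} {v : Fin (j - p) → Bool} {w : Fin b → Bool}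

lemma glueN_left {t : ℕ} (h1 : t < j - p) : glueN p j b v w t = v ⟨t, h1⟩ := dif_pos h1

lemma glueN_j : glueN p j b v w j = true := by
  unfold glueN
  rw [dif_neg (by omega), if_pos rfl]

lemma glueN_right {t : ℕ} (h2 : j + p + 1 ≤ t) (hb : t - (j + p + 1) < b) :
    glueN p j b v w t = w ⟨t - (j + p + 1), hb⟩ := by
  unfold glueN
  rw [dif_neg (by omega), if_neg (by omega), dif_pos ⟨h2, hb⟩]

lemma glueN_false {t : ℕ} (h1 : ¬ t < j - p) (h2 : t ≠ j)
    (h3 : ¬ (j + p + 1 ≤ t ∧ t - (j + p + 1) < b)) : glueN p j b v w t = false := by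
  unfold glueN
  rw [dif_neg h1, if_neg h2, dif_neg h3]

lemma glueN_true_cases {t : ℕ} (h : glueN p j b v w t = true) :
    t < j - p ∨ t = j ∨ (j + p + 1 ≤ t ∧ t - (j + p + 1) < b) := by
  by_contra hc
  push_neg at hc
  rw [glueN_false (by omega) hc.2.1 (fun hx => by omega)] at h
  exact absurd h (by simp)

def splitEquiv (p m j : ℕ) (hj : j < m) :
    {u : Fin m → Bool // IsFibStr p u ∧ u ⟨j, hj⟩ = true} ≃
      ({v : Fin (j - p) → Bool // IsFibStr p v} ×
       {w : Fin (m - 1 - j - p) → Bool // IsFibStr p w}) where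
  toFun u :=
    (⟨fun i => u.1 ⟨i.1, by omega⟩, by
        intro i1 i2 h1 h2 hlt
        exact u.2.1 ⟨i1.1, by omega⟩ ⟨i2.1, by omega⟩ h1 h2 hlt⟩,
     ⟨fun i => u.1 ⟨j + p + 1 + i.1, by omega⟩, by
        intro i1 i2 h1 h2 hlt
        have key : (j + p + 1 + i1.1) + p + 1 ≤ j + p + 1 + i2.1 :=
          u.2.1 ⟨j + p + 1 + i1.1, by omega⟩ ⟨j + p + 1 + i2.1, by omega⟩ h1 h2
            (by omega : j + p + 1 + i1.1 < j + p + 1 + i2.1)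
        omega⟩)
  invFun vw := ⟨fun i => glueN p j (m - 1 - j - p) vw.1.1 vw.2.1 i.1, by
      refine ⟨?_, ?_⟩
      · intro i1 i2 h1 h2 hlt
        replace h1 : glueN p j (m - 1 - j - p) vw.1.1 vw.2.1 i1.1 = true := h1
        replace h2 : glueN p j (m - 1 - j - p) vw.1.1 vw.2.1 i2.1 = true := h2
        rcases glueN_true_cases h1 with c1 | c1 | c1 <;>
          rcases glueN_true_cases h2 with c2 | c2 | c2
        · rw [glueN_left c1] at h1
          rw [glueN_left c2] at h2
          exact vw.1.2 ⟨i1.1, c1⟩ ⟨i2.1, c2⟩ h1 h2 hlt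
        all_goals try omega
        rw [glueN_right c1.1 c1.2] at h1
        rw [glueN_right c2.1 c2.2] at h2
        have key : (i1.1 - (j + p + 1)) + p + 1 ≤ i2.1 - (j + p + 1) :=
          vw.2.2 ⟨i1.1 - (j + p + 1), c1.2⟩ ⟨i2.1 - (j + p + 1), c2.2⟩ h1 h2
            (by omega : i1.1 - (j + p + 1) < i2.1 - (j + p + 1))
        omega
      · show glueN p j (m - 1 - j - p) vw.1.1 vw.2.1 j = true
        exact glueN_j⟩
  left_inv u := by
    apply Subtype.ext
    funext i
    show glueN p j (m - 1 - j - p) _ _ i.1 = u.1 i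
    have him : i.1 < m := i.2
    rcases Nat.lt_trichotomy i.1 j with hij | hij | hij
    · by_cases c1 : i.1 < j - p
      · rw [glueN_left c1]
      · rw [glueN_false c1 (by omega) (by omega)]
        by_contra hne
        have hui : u.1 i = true := by
          cases hv : u.1 i
          · rw [hv] at hne; exact absurd rfl (Ne.symm hne)
          · rfl
        have key : i.1 + p + 1 ≤ j := u.2.1 i ⟨j, hj⟩ hui u.2.2 hij
        omega
    · rw [hij, glueN_j]
      have : i = ⟨j, hj⟩ := Fin.ext hij
      rw [this, u.2.2]
    · by_cases c2 : j + p + 1 ≤ i.1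
      · rw [glueN_right c2 (by omega)]
        exact (congrArg u.1 (Fin.ext (by simp; omega))).symm.symm
      · rw [glueN_false (by omega) (by omega) (by omega)]
        by_contra hne
        have hui : u.1 i = true := by
          cases hv : u.1 i
          · rw [hv] at hne; exact absurd rfl (Ne.symm hne)
          · rfl
        have key : j + p + 1 ≤ i.1 := u.2.1 ⟨j, hj⟩ i u.2.2 hui hij
        omega
  right_inv vw := by
    refine Prod.ext (Subtype.ext (funext fun i => ?_)) (Subtype.ext (funext fun i => ?_))
    · show glueN p j (m - 1 - j - p) _ _ i.1 = vw.1.1 i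
      rw [glueN_left i.2]
    · show glueN p j (m - 1 - j - p) _ _ (j + p + 1 + i.1) = vw.2.1 i
      rw [glueN_right (by omega) (by omega : j + p + 1 + i.1 - (j + p + 1) < m - 1 - j - p)]
      · exact congrArg vw.2.1 (Fin.ext (by simp))

end MoAux

namespace MoAux

open Finset

variable {p n : ℕ}

def cnt (p m : ℕ) : ℕ := Fintype.card {u : Fin m → Bool // IsFibStr p u}

lemma cnt_zero : cnt p 0 = 1 := by
  rw [cnt, Fintype.card_eq_one_iff]
  refine ⟨⟨fun i => i.elim0, fun i => i.elim0⟩, fun y => ?_⟩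
  apply Subtype.ext
  funext i
  exact i.elim0

def extEquiv (p m : ℕ) :
    {u : Fin (m + 1) → Bool // IsFibStr p u ∧ u (Fin.last m) = false} ≃
      {v : Fin m → Bool // IsFibStr p v} where
  toFun u := ⟨fun i => u.1 i.castSucc, by
    intro i1 i2 h1 h2 hlt
    have := u.2.1 i1.castSucc i2.castSucc h1 h2 (by simpa using hlt)
    simpa using this⟩
  invFun v := ⟨Fin.snoc v.1 false, by
    refine ⟨?_, by simp⟩
    intro i1 i2 h1 h2 hlt
    rcases Fin.eq_castSucc_or_eq_last i1 with ⟨j1, rfl⟩ | rfl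
    · rcases Fin.eq_castSucc_or_eq_last i2 with ⟨j2, rfl⟩ | rfl
      · rw [Fin.snoc_castSucc] at h1 h2
        have := v.2 j1 j2 h1 h2 (by simpa using hlt)
        simpa using this
      · rw [Fin.snoc_last] at h2
        exact absurd h2 (by simp)
    · rw [Fin.snoc_last] at h1
      exact absurd h1 (by simp)⟩
  left_inv u := by
    apply Subtype.ext
    funext i
    show Fin.snoc (α := fun _ => Bool) (fun i => u.1 i.castSucc) false i = u.1 i
    induction i using Fin.lastCases with
    | last => rw [Fin.snoc_last]; exact u.2.2.symm
    | cast i => rw [Fin.snoc_castSucc]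
  right_inv v := by
    apply Subtype.ext
    funext i
    show Fin.snoc (α := fun _ => Bool) v.1 false i.castSucc = v.1 i
    exact Fin.snoc_castSucc _ _ i

lemma cnt_succ (m : ℕ) : cnt p (m + 1) = cnt p m + cnt p (m - p) := by
  classical
  have hpart := Finset.card_filter_add_card_filter_not
    (s := (Finset.univ : Finset {u : Fin (m + 1) → Bool // IsFibStr p u}))
    (p := fun u => u.1 (Fin.last m) = true)
  rw [Finset.card_univ] at hpart
  have htrue : (Finset.univ.filter
      fun u : {u : Fin (m + 1) → Bool // IsFibStr p u} => u.1 (Fin.last m) = true).card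
      = cnt p (m - p) := by
    rw [← Fintype.card_subtype]
    have e : Fintype.card
        {x : {u : Fin (m + 1) → Bool // IsFibStr p u} // x.1 (Fin.last m) = true}
        = cnt p (m - p) * cnt p (m + 1 - 1 - m - p) :=
      (Fintype.card_congr ((Equiv.subtypeSubtypeEquivSubtypeInter _ _).trans
        (splitEquiv p (m + 1) m (Nat.lt_succ_self m)))).trans (Fintype.card_prod _ _)
    rw [e, show m + 1 - 1 - m - p = 0 from by omega, cnt_zero, mul_one]
  have hfalse : (Finset.univ.filter
      fun u : {u : Fin (m + 1) → Bool // IsFibStr p u} => ¬ u.1 (Fin.last m) = true).card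
      = cnt p m := by
    rw [← Fintype.card_subtype]
    have e1 : {x : {u : Fin (m + 1) → Bool // IsFibStr p u} // ¬ x.1 (Fin.last m) = true}
        ≃ {u : Fin (m + 1) → Bool // IsFibStr p u ∧ u (Fin.last m) = false} := by
      refine (Equiv.subtypeSubtypeEquivSubtypeInter
        (fun u : Fin (m + 1) → Bool => IsFibStr p u)
        (fun u => ¬ u (Fin.last m) = true)).trans (Equiv.subtypeEquivRight ?_)
      intro u
      simp
    have e : Fintype.card
        {x : {u : Fin (m + 1) → Bool // IsFibStr p u} // ¬ x.1 (Fin.last m) = true}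
        = cnt p m := Fintype.card_congr (e1.trans (extEquiv p m))
    rw [e]
  rw [htrue, hfalse] at hpart
  rw [cnt, ← hpart]
  omega

lemma fibP_succ_def (m : ℕ) :
    fibP p (m + 1) = if m + 1 ≤ p then 1 else fibP p m + fibP p (m - p) := by
  rw [fibP]

lemma fibP_of_le {m : ℕ} (h1 : 1 ≤ m) (h2 : m ≤ p) : fibP p m = 1 := by
  cases m with
  | zero => omega
  | succ k => rw [fibP_succ_def, if_pos h2]

lemma fibP_rec {m : ℕ} (h : p ≤ m) : fibP p (m + 1) = fibP p m + fibP p (m - p) := by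
  rw [fibP_succ_def, if_neg (by omega)]

lemma fibP_zero : fibP p 0 = 0 := by rw [fibP]

lemma fibP_p1 (hp : 1 ≤ p) : fibP p (p + 1) = 1 := by
  rw [fibP_rec (le_refl p), fibP_of_le hp (le_refl p), Nat.sub_self, fibP_zero]

lemma fibP_shift (hp : 1 ≤ p) (t : ℕ) : fibP p ((t - p) + p + 1) = fibP p (t + 1) := by
  rcases le_or_gt p t with h | h
  · congr 1
    omega
  · rw [show (t - p) + p + 1 = p + 1 from by omega, fibP_p1 hp,
      fibP_of_le (by omega) (by omega)]

lemma cnt_eq (hp : 1 ≤ p) : ∀ m, cnt p m = fibP p (m + p + 1) := by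
  intro m
  induction m using Nat.strong_induction_on with
  | _ m ih =>
    match m with
    | 0 =>
      rw [cnt_zero, Nat.zero_add, fibP_p1 hp]
    | m + 1 =>
      rw [cnt_succ, ih m (by omega), ih (m - p) (by omega), fibP_shift hp]
      have hrec : fibP p ((m + p + 1) + 1) = fibP p (m + p + 1) + fibP p (m + 1) := by
        rw [fibP_rec (by omega), show m + p + 1 - p = m + 1 from by omega]
      rw [show m + 1 + p + 1 = (m + p + 1) + 1 from by omega, hrec]

lemma card_V (hp : 1 ≤ p) :
    Fintype.card {u : Fin n → Bool // IsFibStr p u} = fibP p (n + p + 1) := cnt_eq hp n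

lemma card_true_eq (hp : 1 ≤ p) (j : Fin n) :
    (Finset.univ.filter fun w : {u : Fin n → Bool // IsFibStr p u} => w.1 j = true).card
      = fibP p (j.1 + 1) * fibP p (n - j.1) := by
  classical
  rw [← Fintype.card_subtype]
  have e : Fintype.card
      {x : {u : Fin n → Bool // IsFibStr p u} // x.1 j = true}
      = cnt p (j.1 - p) * cnt p (n - 1 - j.1 - p) :=
    (Fintype.card_congr ((Equiv.subtypeSubtypeEquivSubtypeInter _ _).trans
      (splitEquiv p n j.1 j.2))).trans (Fintype.card_prod _ _)
  rw [e, cnt_eq hp, cnt_eq hp, fibP_shift hp, fibP_shift hp,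
    show n - 1 - j.1 + 1 = n - j.1 from by have := j.2; omega]

end MoAux

namespace MoAux

variable {p n : ℕ}

lemma flip_valid {w : {u : Fin n → Bool // IsFibStr p u}} {j : Fin n} (hw : w.1 j = true) :
    IsFibStr p (flipCoord w.1 j) := by
  apply isFibStr_mono w.2
  intro i hi
  by_cases h : i = j
  · subst h; rw [flip_apply_self, hw] at hi; simp at hi
  · rwa [flip_apply_ne _ j i h] at hi

end MoAux

/-- Mostar index of `Γ^p_n`:
`Mo(Γ^p_n) = F^p_{n+p+1}·Σ_{i=1}^n F^p_i F^p_{n-i+1} - 2·Σ_{i=1}^n (F^p_i F^p_{n-i+1})²`. -/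
theorem mostar_fibCube (p n : ℕ) (hp : 1 ≤ p) (hn : 1 ≤ n) :
    ∑ e ∈ (FibCube p n).edgeFinset,
      Sym2.lift ⟨fun u v =>
        |(Nat.card {w : {u : Fin n → Bool // IsFibStr p u} //
              (FibCube p n).dist w u < (FibCube p n).dist w v} : ℤ) -
          (Nat.card {w : {u : Fin n → Bool // IsFibStr p u} //
              (FibCube p n).dist w v < (FibCube p n).dist w u} : ℤ)|,
        fun u v => abs_sub_comm _ _⟩ e =
      (fibP p (n + p + 1) : ℤ) *
          (∑ i ∈ Finset.Icc 1 n, (fibP p i : ℤ) * (fibP p (n - i + 1) : ℤ)) -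
        2 * ∑ i ∈ Finset.Icc 1 n, ((fibP p i : ℤ) * (fibP p (n - i + 1) : ℤ)) ^ 2 := by
  classical
  open MoAux in
  set VT := {u : Fin n → Bool // IsFibStr p u} with hVT
  set S : Finset (Fin n × VT) := Finset.univ.filter (fun x => x.2.1 x.1 = true) with hS
  set N : Fin n → ℕ :=
    fun j => (Finset.univ.filter fun w : VT => w.1 j = true).card with hN
  -- Step 1: reindex the edge sum
  have step1 : ∑ e ∈ (FibCube p n).edgeFinset,
      Sym2.lift ⟨fun u v =>
        |(Nat.card {w : VT // (FibCube p n).dist w u < (FibCube p n).dist w v} : ℤ) -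
          (Nat.card {w : VT // (FibCube p n).dist w v < (FibCube p n).dist w u} : ℤ)|,
        fun u v => abs_sub_comm _ _⟩ e =
      ∑ x ∈ S, ((Fintype.card VT : ℤ) - 2 * (N x.1 : ℤ)) := by
    refine (Finset.sum_bij
      (fun (x : Fin n × VT) (hx : x ∈ S) =>
        s(⟨flipCoord x.2.1 x.1, MoAux.flip_valid (Finset.mem_filter.mp hx).2⟩, x.2))
      ?_ ?_ ?_ ?_).symm
    · -- maps to edgeFinset
      intro x hx
      rw [SimpleGraph.mem_edgeFinset, SimpleGraph.mem_edgeSet]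
      show MoAux.hd (flipCoord x.2.1 x.1) x.2.1 = 1
      rw [MoAux.hd_comm]
      exact MoAux.hd_flip _ _
    · -- injective
      intro x hx y hy hxy
      have hwx : x.2.1 x.1 = true := (Finset.mem_filter.mp hx).2
      have hwy : y.2.1 y.1 = true := (Finset.mem_filter.mp hy).2
      rcases Sym2.eq_iff.mp hxy with ⟨h1, h2⟩ | ⟨h1, h2⟩
      · -- same order
        have hw : x.2 = y.2 := h2
        have hf : flipCoord x.2.1 x.1 = flipCoord y.2.1 y.1 := congrArg Subtype.val h1
        rw [← hw] at hf
        have hjj : x.1 = y.1 := by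
          by_contra hne
          have e1 : flipCoord x.2.1 x.1 x.1 = false := by
            rw [MoAux.flip_apply_self, hwx]; rfl
          have e2 : flipCoord x.2.1 y.1 x.1 = true := by
            rw [MoAux.flip_apply_ne _ _ _ hne]; exact hwx
          rw [hf, e2] at e1
          exact absurd e1 (by simp)
        exact Prod.ext hjj hw
      · -- swapped order: impossible
        exfalso
        have hf1 : flipCoord x.2.1 x.1 = y.2.1 := congrArg Subtype.val h1
        have hf2 : x.2.1 = flipCoord y.2.1 y.1 := congrArg Subtype.val h2
        have hy2x : y.2.1 x.1 = false := by
          rw [← hf1, MoAux.flip_apply_self, hwx]; rfl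
        by_cases hne : y.1 = x.1
        · rw [hne, hy2x] at hwy; exact absurd hwy (by simp)
        · have : x.2.1 x.1 = y.2.1 x.1 := by
            rw [hf2, MoAux.flip_apply_ne _ _ _ (fun h => hne h.symm)]
          rw [hwx, hy2x] at this
          exact absurd this (by simp)
    · -- surjective
      intro e he
      induction e using Sym2.ind with
      | _ u v =>
        have hadj : (FibCube p n).Adj u v := by
          rw [SimpleGraph.mem_edgeFinset, SimpleGraph.mem_edgeSet] at he
          exact he
        obtain ⟨j, hj⟩ := Finset.card_eq_one.mp hadj
        have hjmem : u.1 j ≠ v.1 j := by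
          have : j ∈ Finset.univ.filter fun i => u.1 i ≠ v.1 i := by
            rw [hj]; exact Finset.mem_singleton_self j
          simpa using this
        have hother : ∀ i, i ≠ j → u.1 i = v.1 i := by
          intro i hi
          by_contra hc
          have : i ∈ Finset.univ.filter fun i => u.1 i ≠ v.1 i := by
            simp [hc]
          rw [hj, Finset.mem_singleton] at this
          exact hi this
        cases hv : v.1 j
        · -- v j = false, so u j = true; x = (j, u)
          have hu : u.1 j = true := by
            cases hu' : u.1 j
            · rw [hu', hv] at hjmem; exact absurd rfl hjmem
            · rfl
          refine ⟨(j, u), Finset.mem_filter.mpr ⟨Finset.mem_univ _, hu⟩, ?_⟩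
          have hflip : flipCoord u.1 j = v.1 := by
            funext i
            by_cases hij : i = j
            · subst hij
              rw [MoAux.flip_apply_self, hu, hv]
              decide
            · rw [MoAux.flip_apply_ne _ _ _ hij]; exact hother i hij
          exact Sym2.eq_iff.mpr (Or.inr ⟨Subtype.ext hflip, rfl⟩)
        · -- v j = true; x = (j, v)
          refine ⟨(j, v), Finset.mem_filter.mpr ⟨Finset.mem_univ _, hv⟩, ?_⟩
          have hflip : flipCoord v.1 j = u.1 := by
            funext i
            by_cases hij : i = j
            · subst hij
              rw [MoAux.flip_apply_self, hv]
              cases hu' : u.1 i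
              · decide
              · exact absurd (hu'.trans hv.symm) hjmem
            · rw [MoAux.flip_apply_ne _ _ _ hij]; exact (hother i hij).symm
          exact Sym2.eq_iff.mpr (Or.inl ⟨Subtype.ext hflip, rfl⟩)
    · -- values agree
      intro x hx
      have hwx : x.2.1 x.1 = true := (Finset.mem_filter.mp hx).2
      rw [Sym2.lift_mk]
      exact (MoAux.edge_term
        (u := ⟨flipCoord x.2.1 x.1, MoAux.flip_valid hwx⟩) (v := x.2) x.1
        (fun i hi => MoAux.flip_apply_ne _ _ _ hi)
        (by show flipCoord x.2.1 x.1 x.1 = false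
            rw [MoAux.flip_apply_self, hwx]
            decide)
        hwx).symm
  rw [step1]
  -- Step 2: group by coordinate
  have step2 : ∑ x ∈ S, ((Fintype.card VT : ℤ) - 2 * (N x.1 : ℤ)) =
      ∑ j : Fin n, (N j : ℤ) * ((Fintype.card VT : ℤ) - 2 * (N j : ℤ)) := by
    rw [hS, Finset.sum_filter, Fintype.sum_prod_type]
    apply Finset.sum_congr rfl
    intro j _
    have hbody : (∑ a : VT, if (j, a).2.1 (j, a).1 = true
          then ((Fintype.card VT : ℤ) - 2 * (N (j, a).1 : ℤ)) else 0)
        = ∑ a : VT, (if a.1 j = true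
          then ((Fintype.card VT : ℤ) - 2 * (N j : ℤ)) else 0) := rfl
    rw [hbody, ← Finset.sum_filter, Finset.sum_const, nsmul_eq_mul]
  rw [step2]
  -- Step 3: plug in the counts
  have hNval : ∀ j : Fin n, (N j : ℤ) = (fibP p (j.1 + 1) : ℤ) * (fibP p (n - j.1) : ℤ) := by
    intro j
    rw [hN]
    show ((Finset.univ.filter fun w : VT => w.1 j = true).card : ℤ) = _
    rw [MoAux.card_true_eq hp j]
    push_cast
    ring
  have hcard : (Fintype.card VT : ℤ) = (fibP p (n + p + 1) : ℤ) := by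
    rw [MoAux.card_V hp]
  -- Step 4: convert RHS sums to sums over Fin n
  have hsum1 : ∑ i ∈ Finset.Icc 1 n, (fibP p i : ℤ) * (fibP p (n - i + 1) : ℤ) =
      ∑ j : Fin n, (fibP p (j.1 + 1) : ℤ) * (fibP p (n - j.1) : ℤ) := by
    rw [← Finset.Ico_add_one_right_eq_Icc, Finset.sum_Ico_eq_sum_range,
      show n + 1 - 1 = n from rfl,
      ← Fin.sum_univ_eq_sum_range (fun i => (fibP p (1 + i) : ℤ) * (fibP p (n - (1 + i) + 1) : ℤ))]
    apply Finset.sum_congr rfl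
    intro j _
    have hj := j.2
    rw [show 1 + j.1 = j.1 + 1 from by omega, show n - (j.1 + 1) + 1 = n - j.1 from by omega]
  have hsum2 : ∑ i ∈ Finset.Icc 1 n, ((fibP p i : ℤ) * (fibP p (n - i + 1) : ℤ)) ^ 2 =
      ∑ j : Fin n, ((fibP p (j.1 + 1) : ℤ) * (fibP p (n - j.1) : ℤ)) ^ 2 := by
    rw [← Finset.Ico_add_one_right_eq_Icc, Finset.sum_Ico_eq_sum_range,
      show n + 1 - 1 = n from rfl,
      ← Fin.sum_univ_eq_sum_range
      (fun i => ((fibP p (1 + i) : ℤ) * (fibP p (n - (1 + i) + 1) : ℤ)) ^ 2)]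
    apply Finset.sum_congr rfl
    intro j _
    have hj := j.2
    rw [show 1 + j.1 = j.1 + 1 from by omega, show n - (j.1 + 1) + 1 = n - j.1 from by omega]
  rw [hsum1, hsum2, Finset.mul_sum, Finset.mul_sum, ← Finset.sum_sub_distrib]
  apply Finset.sum_congr rfl
  intro j _
  rw [hNval j, hcard]
  ring
end

section
/- For every integer p ≥ 1 and every integer n ≥ 0, the Fibonacci p-cube Γ^p_n is an isometric subgraph of the hypercube Q_n: Γ^p_n is connected, and for any two Fibonacci p-strings u and v of length n, the graph distance between u and v in Γ^p_n equals the Hamming distance between u and v (the number of coordinates in which they differ). -/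
namespace FibIso

variable {n p : ℕ}

def ham (u v : Fin n → Bool) : ℕ := (Finset.univ.filter fun i => u i ≠ v i).card

lemma isFibStr_mono {u v : Fin n → Bool} (h : ∀ i, u i = true → v i = true)
    (hv : IsFibStr p v) : IsFibStr p u :=
  fun i j hi hj hij => hv i j (h i hi) (h j hj) hij

lemma ham_eq_zero {u v : Fin n → Bool} (h : ham u v = 0) : u = v := by
  funext i
  by_contra hne
  rw [ham, Finset.card_eq_zero, Finset.eq_empty_iff_forall_notMem] at h
  exact h i (by simp [hne])

lemma ham_self (u : Fin n → Bool) : ham u u = 0 := by simp [ham]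

lemma ham_triangle (u w v : Fin n → Bool) : ham u v ≤ ham u w + ham w v := by
  refine le_trans (Finset.card_le_card ?_) (Finset.card_union_le _ _)
  intro i hi
  simp only [Finset.mem_filter, Finset.mem_union, Finset.mem_univ, true_and] at hi ⊢
  by_contra hc
  push_neg at hc
  exact hi (hc.1.trans hc.2)

lemma step {u v : Fin n → Bool} (hu : IsFibStr p u) (hv : IsFibStr p v)
    (hne : u ≠ v) : ∃ w : Fin n → Bool, IsFibStr p w ∧ ham u w = 1 ∧ ham w v + 1 = ham u v := by
  classical
  set S := Finset.univ.filter fun i => u i ≠ v i with hS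
  have hSne : S.Nonempty := by
    rw [Finset.filter_nonempty_iff]
    by_contra hc
    push_neg at hc
    exact hne (funext fun i => by simpa using hc i (Finset.mem_univ i))
  -- choose j
  have key : ∃ j ∈ S, IsFibStr p (Function.update u j (v j)) := by
    by_cases hcase : ∃ j ∈ S, u j = true
    · obtain ⟨j, hjS, hj1⟩ := hcase
      refine ⟨j, hjS, isFibStr_mono (v := u) ?_ hu⟩
      intro i hi
      rcases eq_or_ne i j with rfl | hij
      · rw [Function.update_self] at hi
        have : u i ≠ v i := by simpa [hS] using hjS
        exact absurd (hj1.trans hi.symm) this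
      · rwa [Function.update_of_ne hij] at hi
    · push_neg at hcase
      obtain ⟨j, hjS⟩ := hSne
      refine ⟨j, hjS, isFibStr_mono (v := v) ?_ hv⟩
      intro i hi
      rcases eq_or_ne i j with rfl | hij
      · rwa [Function.update_self] at hi
      · rw [Function.update_of_ne hij] at hi
        by_contra hvi
        have hiS : i ∈ S := by
          simp [hS, hi, Bool.not_eq_true] at hvi ⊢
          simp [hi, hvi]
        exact absurd hi (by simpa using hcase i hiS)
  obtain ⟨j, hjS, hw⟩ := key
  have hjuv : u j ≠ v j := by simpa [hS] using hjS
  refine ⟨Function.update u j (v j), hw, ?_, ?_⟩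
  · have : (Finset.univ.filter fun i => u i ≠ Function.update u j (v j) i) = {j} := by
      ext i
      simp only [Finset.mem_filter, Finset.mem_univ, true_and, Finset.mem_singleton]
      rcases eq_or_ne i j with rfl | hij
      · simp [hjuv]
      · simp [Function.update_of_ne hij, hij]
    rw [ham, this, Finset.card_singleton]
  · have : (Finset.univ.filter fun i => Function.update u j (v j) i ≠ v i) = S.erase j := by
      ext i
      simp only [Finset.mem_filter, Finset.mem_univ, true_and, Finset.mem_erase, hS]
      rcases eq_or_ne i j with rfl | hij
      · simp
      · simp [Function.update_of_ne hij, hij]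
    rw [ham, this]
    exact Finset.card_erase_add_one hjS

end FibIso

namespace FibIso

lemma walk_exists (p n : ℕ) : ∀ d (u v : {u : Fin n → Bool // IsFibStr p u}),
    ham u.1 v.1 = d → ∃ W : (FibCube p n).Walk u v, W.length = d := by
  intro d
  induction d with
  | zero =>
    intro u v h
    have he : u = v := Subtype.ext (ham_eq_zero h)
    subst he
    exact ⟨SimpleGraph.Walk.nil, rfl⟩
  | succ d ih =>
    intro u v h
    have hne : u.1 ≠ v.1 := fun he => by simp [he, ham_self] at h
    obtain ⟨w, hw, h1, h2⟩ := step u.2 v.2 hne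
    have hadj : (FibCube p n).Adj u ⟨w, hw⟩ := h1
    have hd : ham w v.1 = d := by omega
    obtain ⟨W, hW⟩ := ih ⟨w, hw⟩ v hd
    exact ⟨SimpleGraph.Walk.cons hadj W, by simp [hW]⟩

lemma ham_le_length (p n : ℕ) {u v : {u : Fin n → Bool // IsFibStr p u}}
    (W : (FibCube p n).Walk u v) : ham u.1 v.1 ≤ W.length := by
  induction W with
  | nil => simp [ham_self]
  | @cons a b c h W ih =>
    have h1 : ham a.1 b.1 = 1 := h
    calc ham a.1 c.1 ≤ ham a.1 b.1 + ham b.1 c.1 := ham_triangle _ _ _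
      _ ≤ 1 + W.length := by rw [h1]; omega
      _ = (SimpleGraph.Walk.cons h W).length := by simp [Nat.add_comm]

end FibIso

/-- `Γ^p_n` is an isometric subgraph of `Q_n`: it is connected and the graph
distance between any two vertices equals their Hamming distance. -/
theorem fibCube_isometric (p n : ℕ) (hp : 1 ≤ p) :
    (FibCube p n).Connected ∧
    ∀ u v : {u : Fin n → Bool // IsFibStr p u},
      (FibCube p n).dist u v = (Finset.univ.filter fun i => u.1 i ≠ v.1 i).card := by
  classical
  have reach : ∀ u v : {u : Fin n → Bool // IsFibStr p u}, (FibCube p n).Reachable u v := by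
    intro u v
    obtain ⟨W, -⟩ := FibIso.walk_exists p n (FibIso.ham u.1 v.1) u v rfl
    exact ⟨W⟩
  have hzero : IsFibStr p (fun _ : Fin n => false) := by
    intro i j hi hj hij
    simp at hi
  haveI : Nonempty {u : Fin n → Bool // IsFibStr p u} := ⟨⟨_, hzero⟩⟩
  refine ⟨⟨reach⟩, fun u v => ?_⟩
  have hle : (FibCube p n).dist u v ≤ FibIso.ham u.1 v.1 := by
    obtain ⟨W, hW⟩ := FibIso.walk_exists p n (FibIso.ham u.1 v.1) u v rfl
    exact hW ▸ SimpleGraph.dist_le W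
  have hge : FibIso.ham u.1 v.1 ≤ (FibCube p n).dist u v := by
    obtain ⟨W, hW⟩ := (reach u v).exists_walk_length_eq_dist
    exact hW ▸ FibIso.ham_le_length p n W
  exact le_antisymm hle hge
end
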